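/- Every game G over L5 that has mean C for some integer C is monotone. -/

import Mathlib

universe u

/-- `SetTheory.PGame` (removed from Mathlib), restored with its old definition. -/
inductive SetTheory.PGame : Type (u + 1)
  | mk : ∀ α β : Type u, (α → SetTheory.PGame) → (β → SetTheory.PGame) → SetTheory.PGame

/-- The zero game `{ | }`, as in the old Mathlib. -/
instance SetTheory.PGame.instZeroPGame : Zero SetTheory.PGame :=
  ⟨⟨PEmpty, PEmpty, PEmpty.elim, PEmpty.elim⟩⟩

/-- Combinatorial games over a poset `A` of atoms: either an atomic game `[a]` for an atom
`a : A`, or a composite game `⟨L|R⟩` where `L` and `R` are nonempty families of games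
(the left and right options). -/
inductive PoGame (A : Type u) : Type (u + 1) where
  | atom : A → PoGame A
  | mk : (xl xr : Type u) → (xl → PoGame A) → (xr → PoGame A) →
      Nonempty xl → Nonempty xr → PoGame A

namespace PoGame

variable {A : Type u}

/-- `G` is an atomic game. -/
def IsAtomic : PoGame A → Prop
  | atom _ => True
  | mk _ _ _ _ _ _ => False

/-- `G` is a left option of the game given as second argument. -/
def IsLeftOption (G : PoGame A) : PoGame A → Prop
  | atom _ => False
  | mk _ _ L _ _ _ => ∃ i, L i = G

/-- `G` is a right option of the game given as second argument. -/
def IsRightOption (G : PoGame A) : PoGame A → Prop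
  | atom _ => False
  | mk _ _ _ R _ _ => ∃ j, R j = G

section Order

variable [PartialOrder A]

mutual
  /-- `Le G H` is the relation `G ≤ H` on games over the poset `A`, defined by mutual
  recursion with `Lf` (the relation `G ⊲ H`): `G ≤ H` iff every left option `G^L`
  satisfies `G^L ⊲ H`, every right option `H^R` satisfies `G ⊲ H^R`, and if `G` or `H`
  is atomic then `G ⊲ H`. -/
  inductive Le : PoGame A → PoGame A → Prop
    | intro (G H : PoGame A)
        (hL : ∀ G', IsLeftOption G' G → Lf G' H)
        (hR : ∀ H', IsRightOption H' H → Lf G H')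
        (hA : IsAtomic G ∨ IsAtomic H → Lf G H) : Le G H

  /-- `Lf G H` is the relation `G ⊲ H` on games over the poset `A`: it holds iff some
  right option `G^R` satisfies `G^R ≤ H`, or some left option `H^L` satisfies `G ≤ H^L`,
  or `G = [a]` and `H = [b]` are atomic with `a ≤ b` in `A`. -/
  inductive Lf : PoGame A → PoGame A → Prop
    | rightOption (G H G' : PoGame A) (h : IsRightOption G' G) (hle : Le G' H) : Lf G H
    | leftOption (G H H' : PoGame A) (h : IsLeftOption H' H) (hle : Le G H') : Lf G H
    | atom (a b : A) (hab : a ≤ b) : Lf (atom a) (atom b)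
end

/-- Two games are equivalent if `G ≤ H` and `H ≤ G`. -/
def GEquiv (G H : PoGame A) : Prop := Le G H ∧ Le H G

/-- `G` is locally monotone if `G ≤ G^L` for every left option `G^L` and `G^R ≤ G` for
every right option `G^R`. -/
def LocallyMonotone (G : PoGame A) : Prop :=
  (∀ G', IsLeftOption G' G → Le G G') ∧ (∀ G', IsRightOption G' G → Le G' G)

/-- `G` is an option (left or right) of `H`. -/
def IsOption (G H : PoGame A) : Prop := IsLeftOption G H ∨ IsRightOption G H

/-- `G` is a position of `H`: `H` itself, an option of `H`, an option of an option, etc. -/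
def IsPosition (G H : PoGame A) : Prop := Relation.ReflTransGen IsOption G H

/-- `G` is monotone if every position of `G` is locally monotone. -/
def Monotone (G : PoGame A) : Prop := ∀ K, IsPosition K G → LocallyMonotone K

end Order

/-- The 5-element linearly ordered set `L5 = {-3, -2, -1, 0, 1}`. -/
abbrev L5 : Type := {a : ℤ // -3 ≤ a ∧ a ≤ 1}

/-- `G` has mean `C`: an atomic game `[a]` has mean `a`, and a composite game has mean `C`
iff every left option has mean `C + 1` and every right option has mean `C - 1`. -/
def HasMean : PoGame L5 → ℤ → Prop
  | atom a, C => (a : ℤ) = C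
  | mk _ _ L R _ _, C => (∀ i, HasMean (L i) (C + 1)) ∧ (∀ j, HasMean (R j) (C - 1))

/-- The game `⟨G | H⟩` with a single left option `G` and a single right option `H`. -/
def ofPair (G H : PoGame A) : PoGame A :=
  mk PUnit PUnit (fun _ => G) (fun _ => H) ⟨PUnit.unit⟩ ⟨PUnit.unit⟩

/-- `⋆ = ⟨-1 | -3⟩`. -/
def star : PoGame L5 := ofPair (atom ⟨-1, by norm_num⟩) (atom ⟨-3, by norm_num⟩)

/-- `M(G) = ⟨1 | G⟩`. -/
def M (G : PoGame L5) : PoGame L5 := ofPair (atom ⟨1, by norm_num⟩) G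

/-- `P(G) = ⟨G | -2⟩`. -/
def P (G : PoGame L5) : PoGame L5 := ofPair G (atom ⟨-2, by norm_num⟩)

/-- `P⋆(G) = ⟨G | ⋆⟩`. -/
def Pstar (G : PoGame L5) : PoGame L5 := ofPair G star

/-- `Pn n G = P G` if `n` is odd, `P⋆ G` if `n` is even. -/
def Pn (n : ℕ) (G : PoGame L5) : PoGame L5 := if Odd n then P G else Pstar G

/-- The sequence `G_0 = [0]`, `G_{n+1} = M (Pn n (G_n))`. -/
def Gseq : ℕ → PoGame L5
  | 0 => atom ⟨0, by norm_num⟩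
  | n + 1 => M (Pn n (Gseq n))

/-- The normal-play game obtained from a game over `L5` by replacing every atom by the
normal-play game `0 = { | }`, keeping the tree of left and right options. -/
def np : PoGame L5 → SetTheory.PGame.{0}
  | atom _ => 0
  | mk xl xr L R _ _ => SetTheory.PGame.mk xl xr (fun i => np (L i)) (fun j => np (R j))

end PoGame

/-! If `G` has mean `C` and `H` has mean `D`, then `C < D` forces `G ≤ H` and `C ≤ D` forces
`G ⊲ H`. Every clause in the definitions of `≤` and `⊲` compares a pair of games whose means
still differ in the required direction, since a left option raises the mean by one and a right
option lowers it by one; so both facts follow by a joint induction on the pair. Every position of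
a game with a mean has a mean, and local monotonicity is the case `D = C ± 1`. -/

namespace PoGame

variable {A : Type u}

theorem wellFounded_isOption [PartialOrder A] :
    WellFounded (IsOption : PoGame A → PoGame A → Prop) := by
  refine ⟨fun G => ?_⟩
  induction G with
  | atom a => exact ⟨_, fun K h => by rcases h with h | h <;> exact h.elim⟩
  | mk xl xr L R _ _ ihL ihR => exact ⟨_, by rintro K (⟨i, rfl⟩ | ⟨j, rfl⟩); exacts [ihL i, ihR j]⟩

variable {G G' H : PoGame L5} {C D : ℤ}

theorem HasMean.of_isLeftOption (hG : HasMean G C) (h : IsLeftOption G' G) :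
    HasMean G' (C + 1) := by
  cases G with
  | atom a => exact h.elim
  | mk xl xr L R _ _ => obtain ⟨i, rfl⟩ := h; exact hG.1 i

theorem HasMean.of_isRightOption (hG : HasMean G C) (h : IsRightOption G' G) :
    HasMean G' (C - 1) := by
  cases G with
  | atom a => exact h.elim
  | mk xl xr L R _ _ => obtain ⟨j, rfl⟩ := h; exact hG.2 j

theorem exists_hasMean_of_isPosition (hG : HasMean G C) (h : IsPosition G' G) :
    ∃ D, HasMean G' D := by
  induction h using Relation.ReflTransGen.head_induction_on with
  | refl => exact ⟨C, hG⟩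
  | head hK _ ih =>
    obtain ⟨D, hD⟩ := ih
    rcases hK with hK | hK
    exacts [⟨_, hD.of_isLeftOption hK⟩, ⟨_, hD.of_isRightOption hK⟩]

def MeanComparable (G H : PoGame L5) : Prop :=
  ∀ C D, HasMean G C → HasMean H D → (C < D → Le G H) ∧ (C ≤ D → Lf G H)

theorem lf_of_hasMean_le (hG : HasMean G C) (hH : HasMean H D) (hCD : C ≤ D)
    (hGR : ∀ G', IsRightOption G' G → MeanComparable G' H)
    (hHL : ∀ H', IsLeftOption H' H → MeanComparable G H') : Lf G H := by
  cases G with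
  | mk xl xr L R hL hR =>
    obtain ⟨j⟩ := hR
    have hRj : IsRightOption (R j) (mk xl xr L R hL ⟨j⟩) := ⟨j, rfl⟩
    exact .rightOption _ _ _ hRj ((hGR _ hRj _ _ (hG.of_isRightOption hRj) hH).1 (by omega))
  | atom a =>
    cases H with
    | mk yl yr L R hL hR =>
      obtain ⟨i⟩ := hL
      have hLi : IsLeftOption (L i) (mk yl yr L R ⟨i⟩ hR) := ⟨i, rfl⟩
      exact .leftOption _ _ _ hLi ((hHL _ hLi _ _ hG (hH.of_isLeftOption hLi)).1 (by omega))
    | atom b =>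
      have hab : (a : ℤ) ≤ b := by simp only [HasMean] at hG hH; omega
      exact .atom a b hab

theorem le_of_hasMean_lt (hG : HasMean G C) (hH : HasMean H D) (hCD : C < D)
    (hGL : ∀ G', IsLeftOption G' G → MeanComparable G' H)
    (hHR : ∀ H', IsRightOption H' H → MeanComparable G H') (hGH : Lf G H) : Le G H :=
  .intro G H
    (fun _ h => (hGL _ h _ _ (hG.of_isLeftOption h) hH).2 (by omega))
    (fun _ h => (hHR _ h _ _ hG (hH.of_isRightOption h)).2 (by omega))
    (fun _ => hGH)

theorem meanComparable (G H : PoGame L5) : MeanComparable G H := by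
  induction G using (wellFounded_isOption (A := L5)).induction generalizing H with | _ G ihG
  induction H using (wellFounded_isOption (A := L5)).induction with | _ H ihH
  intro C D hG hH
  have hGH : C ≤ D → Lf G H := fun hCD =>
    lf_of_hasMean_le hG hH hCD (fun G' h => ihG G' (.inr h) H) (fun H' h => ihH H' (.inl h))
  exact ⟨fun hCD => le_of_hasMean_lt hG hH hCD (fun G' h => ihG G' (.inl h) H)
    (fun H' h => ihH H' (.inr h)) (hGH hCD.le), hGH⟩

end PoGame

open PoGame in
/-- Every game over `L5` that has a mean is monotone. -/
theorem stmt_1 (G : PoGame L5) (C : ℤ) (hG : HasMean G C) : PoGame.Monotone G := by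
  intro K hK
  obtain ⟨D, hD⟩ := exists_hasMean_of_isPosition hG hK
  exact ⟨fun K' h => (meanComparable K K' D (D + 1) hD (hD.of_isLeftOption h)).1 (by omega),
    fun K' h => (meanComparable K' K (D - 1) D (hD.of_isRightOption h) hD).1 (by omega)⟩
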